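/- In the pseudometric space of the previous construction, every Cauchy sequence either converges to the special point ∗ or is eventually constant up to the equivalence relation (i.e., the values Y(f_n) are eventually constant); consequently the space is complete. -/
import Mathlib


noncomputable def speckerDist (Y : (ℕ → ℕ) → ℕ) : (ℕ → ℕ) ⊕ Unit → (ℕ → ℕ) ⊕ Unit → ℝ
  | Sum.inl f, Sum.inl g => |(2 : ℝ) ^ (-(Y f : ℤ)) - (2 : ℝ) ^ (-(Y g : ℤ))|
  | Sum.inl f, Sum.inr _ => (2 : ℝ) ^ (-(Y f : ℤ))
  | Sum.inr _, Sum.inl g => (2 : ℝ) ^ (-(Y g : ℤ))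
  | Sum.inr _, Sum.inr _ => 0

noncomputable def sval (Y : (ℕ → ℕ) → ℕ) : (ℕ → ℕ) ⊕ Unit → ℝ
  | Sum.inl f => (2 : ℝ) ^ (-(Y f : ℤ))
  | Sum.inr _ => 0

lemma sval_nonneg (Y : (ℕ → ℕ) → ℕ) (a : (ℕ → ℕ) ⊕ Unit) : 0 ≤ sval Y a := by
  cases a with
  | inl f => exact le_of_lt (zpow_pos two_pos _)
  | inr u => exact le_rfl

lemma speckerDist_eq (Y : (ℕ → ℕ) → ℕ) (a b : (ℕ → ℕ) ⊕ Unit) :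
    speckerDist Y a b = |sval Y a - sval Y b| := by
  cases a with
  | inl f =>
    cases b with
    | inl g => rfl
    | inr u => show _ = |_ - (0:ℝ)|; rw [sub_zero, abs_of_pos (zpow_pos two_pos _)]; rfl
  | inr u =>
    cases b with
    | inl g => show _ = |(0:ℝ) - _|; rw [zero_sub, abs_neg, abs_of_pos (zpow_pos two_pos _)]; rfl
    | inr v => simp [speckerDist, sval]

lemma specker_sep (Y : (ℕ → ℕ) → ℕ) (a b : (ℕ → ℕ) ⊕ Unit) (k : ℕ)
    (hlt : sval Y b < sval Y a)
    (h : |sval Y a - sval Y b| < (2:ℝ) ^ (-(k:ℤ) - 1)) :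
    sval Y a < (2:ℝ) ^ (-(k:ℤ)) := by
  cases a with
  | inr u => exact absurd hlt (not_lt.2 (sval_nonneg Y b))
  | inl f =>
    have hb : sval Y b ≤ (2:ℝ) ^ (-(Y f : ℤ) - 1) := by
      cases b with
      | inr u => exact le_of_lt (zpow_pos two_pos _)
      | inl g =>
        have hgf : -(Y g : ℤ) < -(Y f : ℤ) :=
          (zpow_lt_zpow_iff_right₀ (one_lt_two)).1 hlt
        exact zpow_le_zpow_right₀ one_le_two (by omega)
    have h2 : (2:ℝ) ^ (-(Y f : ℤ) - 1) ≤ sval Y (Sum.inl f) - sval Y b := by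
      have : (2:ℝ) ^ (-(Y f : ℤ)) - (2:ℝ) ^ (-(Y f : ℤ) - 1) = (2:ℝ) ^ (-(Y f : ℤ) - 1) := by
        rw [zpow_sub_one₀ (two_ne_zero)]
        ring
      have := this ▸ sub_le_sub_left hb ((2:ℝ) ^ (-(Y f : ℤ)))
      simpa [sval] using this
    have h3 : (2:ℝ) ^ (-(Y f : ℤ) - 1) < (2:ℝ) ^ (-(k:ℤ) - 1) :=
      lt_of_le_of_lt h2 (lt_of_le_of_lt (le_abs_self _) h)
    have h4 : -(Y f : ℤ) - 1 < -(k:ℤ) - 1 := (zpow_lt_zpow_iff_right₀ one_lt_two).1 h3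
    show (2:ℝ) ^ (-(Y f : ℤ)) < (2:ℝ) ^ (-(k:ℤ))
    exact (zpow_lt_zpow_iff_right₀ one_lt_two).2 (by omega)

/-- Every Cauchy sequence in the pseudometric space `(ℕ → ℕ) ⊕ {∗}` either converges
to `∗` or is eventually constant up to the equivalence relation; in particular it
converges to some point, i.e. the space is complete. -/
theorem specker_space_complete (Y : (ℕ → ℕ) → ℕ) (x : ℕ → (ℕ → ℕ) ⊕ Unit)
    (hcauchy : ∀ k : ℕ, ∃ N : ℕ, ∀ m ≥ N, ∀ n ≥ N,
      speckerDist Y (x n) (x m) < (2 : ℝ) ^ (-(k : ℤ))) :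
    ((∀ ε > (0 : ℝ), ∃ N, ∀ n ≥ N, speckerDist Y (x n) (Sum.inr ()) < ε) ∨
      (∃ N, ∀ m ≥ N, ∀ n ≥ N, speckerDist Y (x m) (x n) = 0)) ∧
    (∃ p : (ℕ → ℕ) ⊕ Unit, ∀ ε > (0 : ℝ), ∃ N, ∀ n ≥ N, speckerDist Y (x n) p < ε) := by
  by_cases hec : ∃ N, ∀ m ≥ N, ∀ n ≥ N, sval Y (x m) = sval Y (x n)
  · obtain ⟨N, hN⟩ := hec
    constructor
    · right
      exact ⟨N, fun m hm n hn => by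
        rw [speckerDist_eq, hN m hm n hn, sub_self, abs_zero]⟩
    · refine ⟨x N, fun ε hε => ⟨N, fun n hn => ?_⟩⟩
      rw [speckerDist_eq, hN n hn N le_rfl, sub_self, abs_zero]
      exact hε
  · push_neg at hec
    have main : ∀ ε > (0 : ℝ), ∃ N, ∀ n ≥ N, speckerDist Y (x n) (Sum.inr ()) < ε := by
      intro ε hε
      obtain ⟨k, hk⟩ := exists_pow_lt_of_lt_one (half_pos hε) (by norm_num : (1/2 : ℝ) < 1)
      have hk' : (2:ℝ) ^ (-(k:ℤ)) < ε / 2 := by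
        have : ((1:ℝ)/2) ^ k = (2:ℝ) ^ (-(k:ℤ)) := by
          rw [zpow_neg, zpow_natCast, one_div, inv_pow]
        rwa [this] at hk
      obtain ⟨N, hN⟩ := hcauchy (k + 1)
      have hN' : ∀ m ≥ N, ∀ n ≥ N,
          |sval Y (x n) - sval Y (x m)| < (2:ℝ) ^ (-(k:ℤ) - 1) := by
        intro m hm n hn
        have := hN m hm n hn
        rw [speckerDist_eq] at this
        have he : (-(((k:ℕ)+1:ℕ) : ℤ)) = -(k:ℤ) - 1 := by push_cast; ring
        rwa [he] at this
      obtain ⟨m, hm, n, hn, hne⟩ := hec N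
      -- one of the two values is < 2^{-k}, in fact both
      have hmlt : sval Y (x m) < (2:ℝ) ^ (-(k:ℤ)) := by
        rcases lt_or_gt_of_ne hne with h | h
        · exact lt_of_lt_of_le h
            (le_of_lt (specker_sep Y (x n) (x m) k h (hN' m hm n hn)))
        · exact specker_sep Y (x m) (x n) k h (by rw [abs_sub_comm]; exact hN' m hm n hn)
      refine ⟨N, fun n' hn' => ?_⟩
      rw [speckerDist_eq]
      have h1 := hN' m hm n' hn'
      have : sval Y (x n') ≤ |sval Y (x n') - sval Y (x m)| + sval Y (x m) := by
        have := abs_sub_abs_le_abs_sub (sval Y (x n')) (sval Y (x m))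
        rw [abs_of_nonneg (sval_nonneg Y (x n')), abs_of_nonneg (sval_nonneg Y (x m))] at this
        linarith
      have h2 : sval Y (x n') < (2:ℝ) ^ (-(k:ℤ) - 1) + (2:ℝ) ^ (-(k:ℤ)) := by
        linarith
      have h3 : (2:ℝ) ^ (-(k:ℤ) - 1) ≤ (2:ℝ) ^ (-(k:ℤ)) :=
        zpow_le_zpow_right₀ one_le_two (by omega)
      have hfin : sval Y (x n') < ε := by linarith
      rw [show sval Y (Sum.inr ()) = 0 from rfl, sub_zero,
        abs_of_nonneg (sval_nonneg Y (x n'))]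
      exact hfin
    exact ⟨Or.inl main, ⟨Sum.inr (), main⟩⟩
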